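/- The subdifferential admits its function as a potential along segments: Let E be a real normed vector space, C ⊆ E a nonempty convex set, and φ: E → ℝ ∪ {+∞} a proper function with dom φ = C such that ∂φ(w) ≠ ∅ for every w ∈ C. Then for all x, z ∈ C and for every function g: [0,1] → ℝ such that for each λ ∈ [0,1] there exists w* ∈ ∂φ(z + λ(x − z)) with g(λ) = ⟨w*, x − z⟩, the function g is integrable on [0,1] and ∫₀¹ g(λ) dλ = φ(x) − φ(z). -/

import Mathlib

/-!
Along the segment, `f t = φ (z + t • (x - z))` is real-valued (a point carrying a subgradient
cannot have value `⊤` once `φ x < ⊤`), and `g` is a selection of subgradients of `f`: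
`f t + (u - t) * g t ≤ f u`. Hence `g` is monotone, so bounded, integrable and continuous off a
countable set; `f` is Lipschitz, and `f u - f t` lies between `(u - t) * g t` and
`(u - t) * g u`, so `f' = g` wherever `g` is continuous. The fundamental theorem of calculus with a
countable exceptional set gives `∫₀¹ g = f 1 - f 0`.
-/

open MeasureTheory

/-- Subdifferential via the subgradient inequality:
`∂φ(x) = {x* : φ(y) ≥ φ(x) + ⟨x*, y − x⟩ for all y}`. -/
def subdiff {E : Type*} [NormedAddCommGroup E] [NormedSpace ℝ E]
    (φ : E → EReal) (x : E) : Set (E →L[ℝ] ℝ) :=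
  {p | ∀ y : E, φ x + ((p (y - x) : ℝ) : EReal) ≤ φ y}

open Set Filter Topology
open scoped NNReal

def HasSubgradientsOn (f g : ℝ → ℝ) (s : Set ℝ) : Prop :=
  ∀ t ∈ s, ∀ u ∈ s, f t + (u - t) * g t ≤ f u

namespace HasSubgradientsOn

variable {f g : ℝ → ℝ} {s : Set ℝ} {a b t u : ℝ}

theorem monotoneOn (h : HasSubgradientsOn f g s) : MonotoneOn g s := by
  intro t ht u hu htu
  have h₁ := h t ht u hu
  have h₂ := h u hu t ht
  rcases htu.eq_or_lt with rfl | htu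
  · exact le_rfl
  nlinarith

theorem abs_sub_sub_mul_le (h : HasSubgradientsOn f g s) (ht : t ∈ s) (hu : u ∈ s) :
    |f u - f t - (u - t) * g t| ≤ |u - t| * |g u - g t| := by
  have h₁ := h t ht u hu
  have h₂ := h u hu t ht
  rw [abs_of_nonneg (by linarith), ← abs_mul]
  exact le_abs.2 (Or.inl (by linarith))

theorem hasDerivAt (h : HasSubgradientsOn f g s) (hs : s ∈ 𝓝 t) (hg : ContinuousAt g t) :
    HasDerivAt f (g t) t := by
  rw [hasDerivAt_iff_tendsto]
  have hlim : Tendsto (fun u => |g u - g t|) (𝓝 t) (𝓝 0) := by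
    simpa using ((hg.sub (continuousAt_const (y := g t))).abs).tendsto
  refine squeeze_zero' (Eventually.of_forall fun _ => by positivity) ?_ hlim
  filter_upwards [hs] with u hu
  rw [Real.norm_eq_abs, Real.norm_eq_abs, smul_eq_mul]
  calc |u - t|⁻¹ * |f u - f t - (u - t) * g t|
      ≤ |u - t|⁻¹ * (|u - t| * |g u - g t|) := by
        gcongr; exact h.abs_sub_sub_mul_le (mem_of_mem_nhds hs) hu
    _ ≤ |g u - g t| := by
        rw [← mul_assoc]
        exact mul_le_of_le_one_left (abs_nonneg _) (inv_mul_le_one_of_le₀ le_rfl (abs_nonneg _))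

theorem lipschitzOnWith (h : HasSubgradientsOn f g s) {M : ℝ≥0} (hM : ∀ t ∈ s, |g t| ≤ M) :
    LipschitzOnWith M f s := by
  refine LipschitzOnWith.of_dist_le_mul fun u hu t ht => ?_
  have h₁ := h t ht u hu
  have h₂ := h u hu t ht
  have hgt : |(u - t) * g t| ≤ M * |u - t| := by
    rw [abs_mul, mul_comm]; gcongr; exact hM t ht
  have hgu : |(u - t) * g u| ≤ M * |u - t| := by
    rw [abs_mul, mul_comm]; gcongr; exact hM u hu
  rw [Real.dist_eq, Real.dist_eq, abs_le]
  constructor <;> linarith [neg_abs_le ((u - t) * g t), le_abs_self ((u - t) * g u)]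

theorem integrableOn_Icc (h : HasSubgradientsOn f g (Icc a b)) : IntegrableOn g (Icc a b) :=
  h.monotoneOn.integrableOn_isCompact isCompact_Icc

theorem integral_Icc (h : HasSubgradientsOn f g (Icc a b)) (hab : a ≤ b) :
    ∫ t in Icc a b, g t = f b - f a := by
  have hbound : ∀ t ∈ Icc a b, |g t| ≤ (max |g a| |g b|).toNNReal := fun t ht =>
    (abs_le_max_abs_abs (h.monotoneOn ⟨le_rfl, hab⟩ ht ht.1)
      (h.monotoneOn ht ⟨hab, le_rfl⟩ ht.2)).trans (Real.le_coe_toNNReal _)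
  rw [integral_Icc_eq_integral_Ioc, ← intervalIntegral.integral_of_le hab]
  refine integral_eq_of_hasDerivAt_off_countable_of_le f g hab
    h.monotoneOn.countable_not_continuousWithinAt (h.lipschitzOnWith hbound).continuousOn
    (fun t ht => ?_) ((intervalIntegrable_iff_integrableOn_Icc_of_le hab).2 h.integrableOn_Icc)
  have hnhds : Icc a b ∈ 𝓝 t := Icc_mem_nhds ht.1.1 ht.1.2
  have hcont : ContinuousWithinAt g (Icc a b) t := by
    by_contra hc
    exact ht.2 ⟨Ioo_subset_Icc_self ht.1, hc⟩
  exact h.hasDerivAt hnhds (hcont.continuousAt hnhds)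

end HasSubgradientsOn

section Subdiff

variable {E : Type*} [NormedAddCommGroup E] [NormedSpace ℝ E] {φ : E → EReal}

theorem lt_top_of_mem_subdiff {p : E →L[ℝ] ℝ} {w y : E} (hp : p ∈ subdiff φ w) (hy : φ y < ⊤) :
    φ w < ⊤ := by
  refine lt_top_iff_ne_top.2 fun htop => ?_
  have h := (hp y).trans_lt hy
  rw [htop, EReal.top_add_coe] at h
  exact lt_irrefl _ h

theorem hasSubgradientsOn_toReal_comp_line (hbot : ∀ x, φ x ≠ ⊥) {y z v : E} (hy : φ y < ⊤)
    {s : Set ℝ} {g : ℝ → ℝ} (hg : ∀ t ∈ s, ∃ p ∈ subdiff φ (z + t • v), g t = p v) :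
    HasSubgradientsOn (fun t => (φ (z + t • v)).toReal) g s := by
  intro t ht u hu
  obtain ⟨p, hp, hpg⟩ := hg t ht
  have hpu := hp (z + u • v)
  rw [add_sub_add_left_eq_sub, ← sub_smul, p.map_smul, smul_eq_mul, ← hpg] at hpu
  have hfin : ∀ r ∈ s, φ (z + r • v) = (φ (z + r • v)).toReal := fun r hr => by
    obtain ⟨q, hq, -⟩ := hg r hr
    exact (EReal.coe_toReal (lt_top_of_mem_subdiff hq hy).ne (hbot _)).symm
  rw [hfin t ht, hfin u hu, ← EReal.coe_add, EReal.coe_le_coe_iff] at hpu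
  exact hpu

end Subdiff

theorem subdifferential_potential_along_segments_general
    {E : Type*} [NormedAddCommGroup E] [NormedSpace ℝ E]
    (C : Set E)
    (φ : E → EReal) (hbot : ∀ x, φ x ≠ ⊥)
    (hdom : ∀ x, φ x < ⊤ ↔ x ∈ C)
    (x z : E) (hx : x ∈ C) (hz : z ∈ C)
    (g : ℝ → ℝ)
    (hg : ∀ lam ∈ Set.Icc (0 : ℝ) 1,
      ∃ p ∈ subdiff φ (z + lam • (x - z)), g lam = p (x - z)) :
    IntegrableOn g (Set.Icc (0 : ℝ) 1) ∧
    (((∫ lam in Set.Icc (0 : ℝ) 1, g lam) : ℝ) : EReal) = φ x - φ z := by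
  have hxfin := (hdom x).2 hx
  have hzfin := (hdom z).2 hz
  have h := hasSubgradientsOn_toReal_comp_line hbot hxfin hg
  refine ⟨h.integrableOn_Icc, ?_⟩
  rw [h.integral_Icc zero_le_one]
  simp only [one_smul, zero_smul, add_zero, add_sub_cancel]
  rw [EReal.coe_sub, EReal.coe_toReal hxfin.ne (hbot x), EReal.coe_toReal hzfin.ne (hbot z)]

/-- **The subdifferential admits its function as a potential along segments.**
If `dom φ = C` is convex, `∂φ(w) ≠ ∅` for all `w ∈ C`, then for `x, z ∈ C` and any
selection `g(λ) = ⟨w*_λ, x − z⟩` with `w*_λ ∈ ∂φ(z + λ(x − z))`, `g` is integrable on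
`[0,1]` and `∫₀¹ g = φ(x) − φ(z)`. -/
theorem subdifferential_potential_along_segments
    {E : Type*} [NormedAddCommGroup E] [NormedSpace ℝ E]
    (C : Set E) (hCne : C.Nonempty) (hCconv : Convex ℝ C)
    (φ : E → EReal) (hbot : ∀ x, φ x ≠ ⊥)
    (hdom : ∀ x, φ x < ⊤ ↔ x ∈ C)
    (hsub : ∀ w ∈ C, (subdiff φ w).Nonempty)
    (x z : E) (hx : x ∈ C) (hz : z ∈ C)
    (g : ℝ → ℝ)
    (hg : ∀ lam ∈ Set.Icc (0 : ℝ) 1,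
      ∃ p ∈ subdiff φ (z + lam • (x - z)), g lam = p (x - z)) :
    IntegrableOn g (Set.Icc (0 : ℝ) 1) ∧
    (((∫ lam in Set.Icc (0 : ℝ) 1, g lam) : ℝ) : EReal) = φ x - φ z :=
  subdifferential_potential_along_segments_general C φ hbot hdom x z hx hz g hg
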